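/- Assume cut elimination for NEL (i.e., NEL is equivalent to SNEL ∪ {∘↓} for provability). Then for any two structures T and R: there is a derivation in SNEL from T to R if and only if there is a proof (derivation with no premise) in NEL of the structure T̄ ⅋ R. -/

import Mathlib

/-!
Deep-inference presentation of NEL (non-commutative exponential linear logic),
following "A System of Interaction and Structure IV: The Exponentials and Decomposition".
-/

/-- NEL structures: atoms (with a polarity), the unit ∘, par ⅋, tensor ⊗,
seq ◁, and the modalities ? and !. -/
inductive Str : Type
  | atom : ℕ → Bool → Str
  | unit : Str
  | par : Str → Str → Str
  | ten : Str → Str → Str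
  | seq : Str → Str → Str
  | quest : Str → Str
  | bang : Str → Str

namespace Str

/-- De Morgan negation, pushed to the atoms; seq does not swap its arguments. -/
def neg : Str → Str
  | atom n b => atom n (!b)
  | unit => unit
  | par a b => ten (neg a) (neg b)
  | ten a b => par (neg a) (neg b)
  | seq a b => seq (neg a) (neg b)
  | quest a => bang (neg a)
  | bang a => quest (neg a)

/-- The syntactic equivalence `=` on NEL structures: associativity of ⅋, ⊗, ◁,
commutativity of ⅋ and ⊗, unit laws for ∘, and contextual closure. -/
inductive Equiv : Str → Str → Prop
  | refl (a) : Equiv a a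
  | symm {a b} : Equiv a b → Equiv b a
  | trans {a b c} : Equiv a b → Equiv b c → Equiv a c
  | parAssoc (a b c) : Equiv (par (par a b) c) (par a (par b c))
  | tenAssoc (a b c) : Equiv (ten (ten a b) c) (ten a (ten b c))
  | seqAssoc (a b c) : Equiv (seq (seq a b) c) (seq a (seq b c))
  | parComm (a b) : Equiv (par a b) (par b a)
  | tenComm (a b) : Equiv (ten a b) (ten b a)
  | parUnit (a) : Equiv (par unit a) a
  | tenUnit (a) : Equiv (ten unit a) a
  | seqUnitL (a) : Equiv (seq unit a) a
  | seqUnitR (a) : Equiv (seq a unit) a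
  | parCongr {a a' b b'} : Equiv a a' → Equiv b b' → Equiv (par a b) (par a' b')
  | tenCongr {a a' b b'} : Equiv a a' → Equiv b b' → Equiv (ten a b) (ten a' b')
  | seqCongr {a a' b b'} : Equiv a a' → Equiv b b' → Equiv (seq a b) (seq a' b')
  | questCongr {a a'} : Equiv a a' → Equiv (quest a) (quest a')
  | bangCongr {a a'} : Equiv a a' → Equiv (bang a) (bang a')

end Str

/-- Contexts: structures with a hole that is not in the scope of a negation. -/
inductive Ctx : Type
  | hole
  | parL (C : Ctx) (T : Str)
  | parR (T : Str) (C : Ctx)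
  | tenL (C : Ctx) (T : Str)
  | tenR (T : Str) (C : Ctx)
  | seqL (C : Ctx) (T : Str)
  | seqR (T : Str) (C : Ctx)
  | quest (C : Ctx)
  | bang (C : Ctx)

/-- Plugging a structure into the hole of a context. -/
def Ctx.fill : Ctx → Str → Str
  | .hole, R => R
  | .parL C T, R => .par (C.fill R) T
  | .parR T C, R => .par T (C.fill R)
  | .tenL C T, R => .ten (C.fill R) T
  | .tenR T C, R => .ten T (C.fill R)
  | .seqL C T, R => .seq (C.fill R) T
  | .seqR T C, R => .seq T (C.fill R)
  | .quest C, R => .quest (C.fill R)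
  | .bang C, R => .bang (C.fill R)

/-- A set of (instances of) inference rules, given as a relation
from premise to conclusion. -/
abbrev Rules := Str → Str → Prop

/-- An instance of a rule of `r` applied deep inside a context. -/
def DeepStep (r : Rules) (P Q : Str) : Prop :=
  ∃ (C : Ctx) (a b : Str), r a b ∧ P = C.fill a ∧ Q = C.fill b

/-- A single inference step: a deep rule application, modulo the
syntactic equivalence on premise and conclusion. -/
def Step (r : Rules) (P Q : Str) : Prop :=
  ∃ P' Q', Str.Equiv P P' ∧ DeepStep r P' Q' ∧ Str.Equiv Q' Q

/-- A derivation in the system `r` from premise `T` (top) to conclusion `R`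
(bottom): a finite chain of inference steps modulo syntactic equivalence. -/
def Deriv (r : Rules) (T R : Str) : Prop :=
  Str.Equiv T R ∨ Relation.TransGen (Step r) T R

/- The rules of SNEL, written premise → conclusion (read downwards). -/

/-- atomic interaction ai↓ : S{∘} → S⟨a ⅋ ā⟩ -/
inductive aiDown : Str → Str → Prop
  | mk (n : ℕ) (b : Bool) : aiDown .unit (.par (.atom n b) (.atom n (!b)))

/-- atomic cut ai↑ : S⟨a ⊗ ā⟩ → S{∘} -/
inductive aiUp : Str → Str → Prop
  | mk (n : ℕ) (b : Bool) : aiUp (.ten (.atom n b) (.atom n (!b))) .unit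

/-- switch s : S⟨(R ⅋ U) ⊗ T⟩ → S⟨(R ⊗ T) ⅋ U⟩ -/
inductive sw : Str → Str → Prop
  | mk (R U T : Str) : sw (.ten (.par R U) T) (.par (.ten R T) U)

/-- seq q↓ : S⟨(R ◁ T) ⅋ (U ◁ V)⟩ → S⟨(R ⅋ U) ◁ (T ⅋ V)⟩ -/
inductive qDown : Str → Str → Prop
  | mk (R T U V : Str) :
      qDown (.par (.seq R T) (.seq U V)) (.seq (.par R U) (.par T V))

/-- coseq q↑ : S⟨(R ⊗ T) ◁ (U ⊗ V)⟩ → S⟨(R ◁ U) ⊗ (T ◁ V)⟩ -/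
inductive qUp : Str → Str → Prop
  | mk (R T U V : Str) :
      qUp (.seq (.ten R T) (.ten U V)) (.ten (.seq R U) (.seq T V))

/-- promotion p↓ : S{!(R ⅋ T)} → S⟨!R ⅋ ?T⟩ -/
inductive pDown : Str → Str → Prop
  | mk (R T : Str) : pDown (.bang (.par R T)) (.par (.bang R) (.quest T))

/-- copromotion p↑ : S⟨?T ⊗ !R⟩ → S{?(T ⊗ R)} -/
inductive pUp : Str → Str → Prop
  | mk (T R : Str) : pUp (.ten (.quest T) (.bang R)) (.quest (.ten T R))

/-- empty e↓ : S{∘} → S{!∘} -/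
inductive eDown : Str → Str → Prop
  | mk : eDown .unit (.bang .unit)

/-- coempty e↑ : S{?∘} → S{∘} -/
inductive eUp : Str → Str → Prop
  | mk : eUp (.quest .unit) .unit

/-- weakening w↓ : S{∘} → S{?R} -/
inductive wDown : Str → Str → Prop
  | mk (R : Str) : wDown .unit (.quest R)

/-- coweakening w↑ : S{!R} → S{∘} -/
inductive wUp : Str → Str → Prop
  | mk (R : Str) : wUp (.bang R) .unit

/-- absorption b↓ : S⟨?R ⅋ R⟩ → S{?R} -/
inductive bDown : Str → Str → Prop
  | mk (R : Str) : bDown (.par (.quest R) R) (.quest R)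

/-- coabsorption b↑ : S{!R} → S⟨!R ⊗ R⟩ -/
inductive bUp : Str → Str → Prop
  | mk (R : Str) : bUp (.bang R) (.ten (.bang R) R)

/-- digging g↓ : S{??R} → S{?R} -/
inductive gDown : Str → Str → Prop
  | mk (R : Str) : gDown (.quest (.quest R)) (.quest R)

/-- codigging g↑ : S{!R} → S{!!R} -/
inductive gUp : Str → Str → Prop
  | mk (R : Str) : gUp (.bang R) (.bang (.bang R))

/-- general interaction i↓ : S{∘} → S⟨R ⅋ R̄⟩ -/
inductive iDown : Str → Str → Prop
  | mk (R : Str) : iDown .unit (.par R R.neg)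

/-- general cut i↑ : S⟨R ⊗ R̄⟩ → S{∘} -/
inductive iUp : Str → Str → Prop
  | mk (R : Str) : iUp (.ten R R.neg) .unit

/-- The unit axiom ∘↓ of NEL.  It has no premise; within a derivation
(which always has a premise) it can therefore only act vacuously, which
we model by the trivial rewrite ∘ → ∘. -/
inductive unitAx : Str → Str → Prop
  | mk : unitAx .unit .unit

/-- System SNEL. -/
def snel : Rules :=
  aiDown ⊔ aiUp ⊔ sw ⊔ qDown ⊔ qUp ⊔ pDown ⊔ pUp ⊔ eDown ⊔ eUp ⊔
    wDown ⊔ wUp ⊔ bDown ⊔ bUp ⊔ gDown ⊔ gUp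

/-- The down fragment of SNEL together with the unit axiom: system NEL. -/
def nel : Rules :=
  unitAx ⊔ aiDown ⊔ sw ⊔ qDown ⊔ pDown ⊔ eDown ⊔ wDown ⊔ bDown ⊔ gDown

/-- The system {s, q↓, q↑}. -/
def swq : Rules := sw ⊔ qDown ⊔ qUp

/-- The hard core SNELh = {s, q↓, q↑, p↓, p↑}. -/
def snelh : Rules := sw ⊔ qDown ⊔ qUp ⊔ pDown ⊔ pUp

/-!
The deduction theorem already holds inside SNEL, because the general interaction and cut rules
are derivable there (by induction on the structure, down to their atomic forms). A derivation
`T → R` yields `∘ →(i↓) T̄ ⅋ T → T̄ ⅋ R`; conversely a derivation of `T̄ ⅋ R` from `∘` yields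
`T = T ⊗ ∘ → T ⊗ (T̄ ⅋ R) →(s) (T ⊗ T̄) ⅋ R →(i↑) R`. Cut elimination then turns a proof in
SNEL ∪ {∘↓} into one in NEL and back, and inside a derivation the axiom `∘↓` is the trivial
rewrite `∘ → ∘`, so it adds nothing to SNEL.
-/

namespace Str.Equiv

local infix:50 " ≡ " => Equiv

instance : Trans Equiv Equiv Equiv := ⟨Equiv.trans⟩

theorem parUnitR (a : Str) : Equiv (par a unit) a :=
  (parComm a unit).trans (parUnit a)

theorem tenUnitR (a : Str) : Equiv (ten a unit) a :=
  (tenComm a unit).trans (tenUnit a)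

theorem parParComm (a b c d : Str) :
    Equiv (par (par a b) (par c d)) (par (par a c) (par b d)) :=
  calc par (par a b) (par c d)
    _ ≡ par a (par b (par c d)) := parAssoc a b _
    _ ≡ par a (par c (par b d)) := parCongr (refl a) <|
      (parAssoc b c d).symm.trans <| (parCongr (parComm b c) (refl d)).trans (parAssoc c b d)
    _ ≡ par (par a c) (par b d) := (parAssoc a c _).symm

theorem tenTenComm (a b c d : Str) :
    Equiv (ten (ten a b) (ten c d)) (ten (ten a c) (ten b d)) :=
  calc ten (ten a b) (ten c d)
    _ ≡ ten a (ten b (ten c d)) := tenAssoc a b _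
    _ ≡ ten a (ten c (ten b d)) := tenCongr (refl a) <|
      (tenAssoc b c d).symm.trans <| (tenCongr (tenComm b c) (refl d)).trans (tenAssoc c b d)
    _ ≡ ten (ten a c) (ten b d) := (tenAssoc a c _).symm

theorem fill (C : Ctx) {a b : Str} (h : Equiv a b) : Equiv (C.fill a) (C.fill b) := by
  induction C with
  | hole => exact h
  | parL C T ih => exact parCongr ih (refl T)
  | parR T C ih => exact parCongr (refl T) ih
  | tenL C T ih => exact tenCongr ih (refl T)
  | tenR T C ih => exact tenCongr (refl T) ih
  | seqL C T ih => exact seqCongr ih (refl T)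
  | seqR T C ih => exact seqCongr (refl T) ih
  | quest C ih => exact questCongr ih
  | bang C ih => exact bangCongr ih

end Str.Equiv

def Ctx.comp : Ctx → Ctx → Ctx
  | .hole, D => D
  | .parL C T, D => .parL (C.comp D) T
  | .parR T C, D => .parR T (C.comp D)
  | .tenL C T, D => .tenL (C.comp D) T
  | .tenR T C, D => .tenR T (C.comp D)
  | .seqL C T, D => .seqL (C.comp D) T
  | .seqR T C, D => .seqR T (C.comp D)
  | .quest C, D => .quest (C.comp D)
  | .bang C, D => .bang (C.comp D)

theorem Ctx.fill_comp (C D : Ctx) (a : Str) : (C.comp D).fill a = C.fill (D.fill a) := by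
  induction C <;> simp only [comp, fill, *]

section Derivations

variable {r s : Rules} {P Q S : Str}

theorem DeepStep.fill (C : Ctx) (h : DeepStep r P Q) : DeepStep r (C.fill P) (C.fill Q) := by
  obtain ⟨D, a, b, hab, rfl, rfl⟩ := h
  exact ⟨C.comp D, a, b, hab, (Ctx.fill_comp C D a).symm, (Ctx.fill_comp C D b).symm⟩

theorem Step.fill (C : Ctx) (h : Step r P Q) : Step r (C.fill P) (C.fill Q) := by
  obtain ⟨P', Q', e₁, d, e₂⟩ := h
  exact ⟨C.fill P', C.fill Q', e₁.fill C, d.fill C, e₂.fill C⟩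

theorem Step.equiv_left (e : Str.Equiv S P) (h : Step r P Q) : Step r S Q := by
  obtain ⟨P', Q', e₁, d, e₂⟩ := h
  exact ⟨P', Q', e.trans e₁, d, e₂⟩

theorem Step.equiv_right (h : Step r P Q) (e : Str.Equiv Q S) : Step r P S := by
  obtain ⟨P', Q', e₁, d, e₂⟩ := h
  exact ⟨P', Q', e₁, d, e₂.trans e⟩

theorem Deriv.of_equiv (e : Str.Equiv P Q) : Deriv r P Q := Or.inl e

theorem Deriv.of_step (h : Step r P Q) : Deriv r P Q := Or.inr (.single h)

theorem Deriv.single (h : r P Q) : Deriv r P Q :=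
  of_step ⟨P, Q, .refl P, ⟨.hole, P, Q, h, rfl, rfl⟩, .refl Q⟩

theorem Deriv.trans : Deriv r P Q → Deriv r Q S → Deriv r P S := by
  rintro (e₁ | t₁) (e₂ | t₂)
  · exact Or.inl (e₁.trans e₂)
  · right
    induction t₂ with
    | single h => exact .single (h.equiv_left e₁)
    | tail _ h ih => exact .tail ih h
  · right
    cases t₁ with
    | single h => exact .single (h.equiv_right e₂)
    | tail t h => exact .tail t (h.equiv_right e₂)
  · exact Or.inr (t₁.trans t₂)

instance : Trans (Deriv r) (Deriv r) (Deriv r) := ⟨Deriv.trans⟩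

instance : Trans Str.Equiv (Deriv r) (Deriv r) := ⟨fun e => (Deriv.of_equiv e).trans⟩

instance : Trans (Deriv r) Str.Equiv (Deriv r) := ⟨fun d e => d.trans (.of_equiv e)⟩

theorem Deriv.of_forall_step (hstep : ∀ {P Q}, Step r P Q → Deriv s P Q) :
    Deriv r P Q → Deriv s P Q := by
  rintro (e | t)
  · exact of_equiv e
  · induction t with
    | single h => exact hstep h
    | tail _ h ih => exact ih.trans (hstep h)

theorem Deriv.fill (C : Ctx) : Deriv r P Q → Deriv r (C.fill P) (C.fill Q) := by
  rintro (e | t)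
  · exact of_equiv (e.fill C)
  · exact Or.inr (t.lift _ fun _ _ h => h.fill C)

theorem Deriv.mono (hrs : r ≤ s) : Deriv r P Q → Deriv s P Q :=
  of_forall_step fun ⟨P', Q', e₁, ⟨C, a, b, hab, hP, hQ⟩, e₂⟩ =>
    of_step ⟨P', Q', e₁, ⟨C, a, b, hrs a b hab, hP, hQ⟩, e₂⟩

theorem Deriv.of_sup_of_eq (hs : ∀ a b, s a b → a = b) : Deriv (r ⊔ s) P Q → Deriv r P Q :=
  of_forall_step fun ⟨P', Q', e₁, ⟨C, a, b, hab, hP, hQ⟩, e₂⟩ => by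
    rcases hab with hr | hs'
    · exact of_step ⟨P', Q', e₁, ⟨C, a, b, hr, hP, hQ⟩, e₂⟩
    · obtain rfl := hs a b hs'
      obtain rfl : P' = Q' := hP.trans hQ.symm
      exact of_equiv (e₁.trans e₂)

end Derivations

theorem deriv_sup_unitAx_iff {r : Rules} {P Q : Str} : Deriv (r ⊔ unitAx) P Q ↔ Deriv r P Q :=
  ⟨Deriv.of_sup_of_eq fun _ _ ⟨⟩ => rfl, Deriv.mono le_sup_left⟩

section SNEL

open Str Str.Equiv

local infix:50 " ≡ " => Str.Equiv
local infix:50 " ⟹ " => Deriv snel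

theorem snel_aiDown (n : ℕ) (b : Bool) : unit ⟹ par (atom n b) (atom n !b) :=
  .single (by simp [snel, aiDown.mk])

theorem snel_aiUp (n : ℕ) (b : Bool) : ten (atom n b) (atom n !b) ⟹ unit :=
  .single (by simp [snel, aiUp.mk])

theorem snel_sw (R U T : Str) : ten (par R U) T ⟹ par (ten R T) U :=
  .single (by simp [snel, sw.mk])

theorem snel_qDown (R T U V : Str) : par (seq R T) (seq U V) ⟹ seq (par R U) (par T V) :=
  .single (by simp [snel, qDown.mk])

theorem snel_qUp (R T U V : Str) : seq (ten R T) (ten U V) ⟹ ten (seq R U) (seq T V) :=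
  .single (by simp [snel, qUp.mk])

theorem snel_pDown (R T : Str) : bang (par R T) ⟹ par (bang R) (quest T) :=
  .single (by simp [snel, pDown.mk])

theorem snel_pUp (T R : Str) : ten (quest T) (bang R) ⟹ quest (ten T R) :=
  .single (by simp [snel, pUp.mk])

theorem snel_eDown : unit ⟹ bang unit :=
  .single (by simp [snel, eDown.mk])

theorem snel_eUp : quest unit ⟹ unit :=
  .single (by simp [snel, eUp.mk])

theorem snel_par_seq (a b : Str) : par a b ⟹ seq a b := calc
  par a b
  _ ≡ par (seq a unit) (seq unit b) := parCongr (seqUnitR a).symm (seqUnitL b).symm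
  _ ⟹ seq (par a unit) (par unit b) := snel_qDown a unit unit b
  _ ≡ seq a b := seqCongr (parUnitR a) (parUnit b)

theorem snel_seq_ten (a b : Str) : seq a b ⟹ ten a b := calc
  seq a b
  _ ≡ seq (ten a unit) (ten unit b) := seqCongr (tenUnitR a).symm (tenUnit b).symm
  _ ⟹ ten (seq a unit) (seq unit b) := snel_qUp a unit unit b
  _ ≡ ten a b := tenCongr (seqUnitR a) (seqUnitL b)

section Interaction

variable {a b : Str} (ha : unit ⟹ par a a.neg)
include ha

theorem snel_iDown_par (hb : unit ⟹ par b b.neg) : unit ⟹ par (par a b) (ten a.neg b.neg) :=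
  calc unit
  _ ⟹ par a a.neg := ha
  _ ≡ par a (ten a.neg unit) := parCongr (refl a) (tenUnitR _).symm
  _ ⟹ par a (ten a.neg (par b b.neg)) := hb.fill (.parR a (.tenR a.neg .hole))
  _ ≡ par a (ten (par b.neg b) a.neg) :=
    parCongr (refl a) ((tenComm _ _).trans (tenCongr (parComm b b.neg) (refl _)))
  _ ⟹ par a (par (ten b.neg a.neg) b) := (snel_sw b.neg b a.neg).fill (.parR a .hole)
  _ ≡ par (par a b) (ten a.neg b.neg) := (parCongr (refl a) (parComm _ b)).trans <|
    (parAssoc a b _).symm.trans (parCongr (refl _) (tenComm _ _))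

theorem snel_iDown_ten (hb : unit ⟹ par b b.neg) : unit ⟹ par (ten a b) (par a.neg b.neg) :=
  calc unit
  _ ⟹ par a a.neg := ha
  _ ≡ par (ten a unit) a.neg := parCongr (tenUnitR a).symm (refl _)
  _ ⟹ par (ten a (par b b.neg)) a.neg := hb.fill (.parL (.tenR a .hole) a.neg)
  _ ≡ par (ten (par b b.neg) a) a.neg := parCongr (tenComm _ _) (refl _)
  _ ⟹ par (par (ten b a) b.neg) a.neg := (snel_sw b b.neg a).fill (.parL .hole a.neg)
  _ ≡ par (ten a b) (par a.neg b.neg) :=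
    (parAssoc _ _ _).trans (parCongr (tenComm b a) (parComm _ _))

theorem snel_iDown_seq (hb : unit ⟹ par b b.neg) : unit ⟹ par (seq a b) (seq a.neg b.neg) :=
  calc unit
  _ ⟹ par a a.neg := ha
  _ ≡ par (par a a.neg) unit := (parUnitR _).symm
  _ ⟹ par (par a a.neg) (par b b.neg) := hb.fill (.parR _ .hole)
  _ ≡ par (par a b) (par a.neg b.neg) := parParComm _ _ _ _
  _ ⟹ par (seq a b) (par a.neg b.neg) := (snel_par_seq a b).fill (.parL .hole _)
  _ ⟹ par (seq a b) (seq a.neg b.neg) := (snel_par_seq a.neg b.neg).fill (.parR _ .hole)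

theorem snel_iDown_quest : unit ⟹ par (quest a) (bang a.neg) := calc
  unit
  _ ⟹ bang unit := snel_eDown
  _ ⟹ bang (par a a.neg) := ha.fill (.bang .hole)
  _ ≡ bang (par a.neg a) := bangCongr (parComm _ _)
  _ ⟹ par (bang a.neg) (quest a) := snel_pDown a.neg a
  _ ≡ par (quest a) (bang a.neg) := parComm _ _

theorem snel_iDown_bang : unit ⟹ par (bang a) (quest a.neg) := calc
  unit
  _ ⟹ bang unit := snel_eDown
  _ ⟹ bang (par a a.neg) := ha.fill (.bang .hole)
  _ ⟹ par (bang a) (quest a.neg) := snel_pDown a a.neg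

end Interaction

section Cut

variable {a b : Str} (ha : ten a a.neg ⟹ unit)
include ha

theorem snel_iUp_par (hb : ten b b.neg ⟹ unit) : ten (par a b) (ten a.neg b.neg) ⟹ unit :=
  calc ten (par a b) (ten a.neg b.neg)
  _ ≡ ten (ten (par a b) a.neg) b.neg := (tenAssoc _ _ _).symm
  _ ⟹ ten (par (ten a a.neg) b) b.neg := (snel_sw a b a.neg).fill (.tenL .hole b.neg)
  _ ⟹ ten (par unit b) b.neg := ha.fill (.tenL (.parL .hole b) b.neg)
  _ ≡ ten b b.neg := tenCongr (parUnit b) (refl _)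
  _ ⟹ unit := hb

theorem snel_iUp_ten (hb : ten b b.neg ⟹ unit) : ten (ten a b) (par a.neg b.neg) ⟹ unit :=
  calc ten (ten a b) (par a.neg b.neg)
  _ ≡ ten (ten (par a.neg b.neg) a) b := (tenComm _ _).trans (tenAssoc _ _ _).symm
  _ ⟹ ten (par (ten a.neg a) b.neg) b := (snel_sw a.neg b.neg a).fill (.tenL .hole b)
  _ ≡ ten (par (ten a a.neg) b.neg) b := tenCongr (parCongr (tenComm _ _) (refl _)) (refl _)
  _ ⟹ ten (par unit b.neg) b := ha.fill (.tenL (.parL .hole b.neg) b)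
  _ ≡ ten b b.neg := (tenCongr (parUnit _) (refl _)).trans (tenComm _ _)
  _ ⟹ unit := hb

theorem snel_iUp_seq (hb : ten b b.neg ⟹ unit) : ten (seq a b) (seq a.neg b.neg) ⟹ unit :=
  calc ten (seq a b) (seq a.neg b.neg)
  _ ⟹ ten (ten a b) (seq a.neg b.neg) := (snel_seq_ten a b).fill (.tenL .hole _)
  _ ⟹ ten (ten a b) (ten a.neg b.neg) := (snel_seq_ten a.neg b.neg).fill (.tenR _ .hole)
  _ ≡ ten (ten a a.neg) (ten b b.neg) := tenTenComm _ _ _ _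
  _ ⟹ ten unit (ten b b.neg) := ha.fill (.tenL .hole _)
  _ ≡ ten b b.neg := tenUnit _
  _ ⟹ unit := hb

theorem snel_iUp_quest : ten (quest a) (bang a.neg) ⟹ unit := calc
  ten (quest a) (bang a.neg)
  _ ⟹ quest (ten a a.neg) := snel_pUp a a.neg
  _ ⟹ quest unit := ha.fill (.quest .hole)
  _ ⟹ unit := snel_eUp

theorem snel_iUp_bang : ten (bang a) (quest a.neg) ⟹ unit := calc
  ten (bang a) (quest a.neg)
  _ ≡ ten (quest a.neg) (bang a) := tenComm _ _
  _ ⟹ quest (ten a.neg a) := snel_pUp a.neg a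
  _ ≡ quest (ten a a.neg) := questCongr (tenComm _ _)
  _ ⟹ quest unit := ha.fill (.quest .hole)
  _ ⟹ unit := snel_eUp

end Cut

theorem snel_iDown : ∀ R : Str, unit ⟹ par R R.neg
  | atom n b => snel_aiDown n b
  | .unit => .of_equiv (parUnit unit).symm
  | par a b => snel_iDown_par (snel_iDown a) (snel_iDown b)
  | ten a b => snel_iDown_ten (snel_iDown a) (snel_iDown b)
  | seq a b => snel_iDown_seq (snel_iDown a) (snel_iDown b)
  | quest a => snel_iDown_quest (snel_iDown a)
  | bang a => snel_iDown_bang (snel_iDown a)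

theorem snel_iUp : ∀ R : Str, ten R R.neg ⟹ unit
  | atom n b => snel_aiUp n b
  | .unit => .of_equiv (tenUnit unit)
  | par a b => snel_iUp_par (snel_iUp a) (snel_iUp b)
  | ten a b => snel_iUp_ten (snel_iUp a) (snel_iUp b)
  | seq a b => snel_iUp_seq (snel_iUp a) (snel_iUp b)
  | quest a => snel_iUp_quest (snel_iUp a)
  | bang a => snel_iUp_bang (snel_iUp a)

theorem snel_deriv_iff_unit_deriv_par_neg (T R : Str) : T ⟹ R ↔ unit ⟹ par T.neg R := by
  constructor
  · intro h
    calc unit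
    _ ⟹ par T T.neg := snel_iDown T
    _ ≡ par T.neg T := parComm _ _
    _ ⟹ par T.neg R := h.fill (.parR _ .hole)
  · intro h
    calc T
    _ ≡ ten T unit := (tenUnitR T).symm
    _ ⟹ ten T (par T.neg R) := h.fill (.tenR T .hole)
    _ ≡ ten (par T.neg R) T := tenComm _ _
    _ ⟹ par (ten T.neg T) R := snel_sw _ _ _
    _ ≡ par (ten T T.neg) R := parCongr (tenComm _ _) (refl _)
    _ ⟹ par unit R := (snel_iUp T).fill (.parL .hole R)
    _ ≡ R := parUnit R

end SNEL

/-- Assuming cut elimination for NEL (SNEL ∪ {∘↓} and NEL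
prove the same structures, a proof being a derivation from the unit ∘
provided by the axiom ∘↓), for any structures T and R there is a derivation
in SNEL from T to R iff there is a proof in NEL of T̄ ⅋ R. -/
theorem deduction_via_cut_elimination
    (cutElim : ∀ R : Str, Deriv (snel ⊔ unitAx) .unit R ↔ Deriv nel .unit R) :
    ∀ T R : Str, Deriv snel T R ↔ Deriv nel .unit (.par T.neg R) := by
  intro T R
  rw [snel_deriv_iff_unit_deriv_par_neg, ← cutElim, deriv_sup_unitAx_iff]
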